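/- Let ν ∈ (0,1), r > 0, and ρ_D ≥ r. Define ρ_D†(θ) = ν r (ν cos θ + √(1 - ν² sin² θ))/(1 - ν²) and ρ_A(ρ_D, θ) = √((ρ_D + r cos θ)² + r² sin² θ). If ρ_D ≤ ρ_D†(θ) then ν · ρ_A(ρ_D, θ) ≥ ρ_D (the defender has angular speed advantage). -/

import Mathlib

/-!
Since `ρ_A² = ρ² + 2 ρ r cos θ + r²`, the defect `ρ² - ν² ρ_A²`, times `1 - ν²`, factors as
`((1 - ν²) ρ - ν r (ν cos θ + s)) ((1 - ν²) ρ - ν r (ν cos θ - s))` with `s = √(1 - ν² sin² θ)`,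
so it is nonpositive between the two roots. The upper root is `ρ_D†(θ)` and, because
`s ≥ |ν cos θ|`, the lower one is `≤ 0`.
-/

open Real

lemma abs_mul_cos_le_sqrt_one_sub_sq_mul_sin_sq {ν : ℝ} (hν : ν ^ 2 ≤ 1) (θ : ℝ) :
    |ν * cos θ| ≤ √(1 - ν ^ 2 * sin θ ^ 2) := by
  refine abs_le_sqrt ?_
  nlinarith [sin_sq_add_cos_sq θ, sq_nonneg (sin θ)]

lemma one_sub_sq_mul_sin_sq_nonneg {ν : ℝ} (hν : ν ^ 2 ≤ 1) (θ : ℝ) :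
    0 ≤ 1 - ν ^ 2 * sin θ ^ 2 := by
  nlinarith [sin_sq_add_cos_sq θ, sq_nonneg (ν * cos θ)]

lemma one_sub_sq_mul_sq_sub_sq_mul_dist_sq_eq {ν r c S s ρ : ℝ} (hsc : S ^ 2 + c ^ 2 = 1)
    (hs : s ^ 2 = 1 - ν ^ 2 * S ^ 2) :
    (1 - ν ^ 2) * (ρ ^ 2 - ν ^ 2 * ((ρ + r * c) ^ 2 + r ^ 2 * S ^ 2)) =
      ((1 - ν ^ 2) * ρ - ν * r * (ν * c + s)) * ((1 - ν ^ 2) * ρ - ν * r * (ν * c - s)) := by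
  linear_combination -ν ^ 2 * r ^ 2 * hsc + ν ^ 2 * r ^ 2 * hs

lemma sq_le_sq_mul_dist_sq_of_le_upper_root {ν r θ ρ : ℝ} (hν : ν ^ 2 < 1) (hρ : 0 < ρ)
    (hle : (1 - ν ^ 2) * ρ ≤ ν * r * (ν * cos θ + √(1 - ν ^ 2 * sin θ ^ 2))) :
    ρ ^ 2 ≤ ν ^ 2 * ((ρ + r * cos θ) ^ 2 + r ^ 2 * sin θ ^ 2) := by
  set s := √(1 - ν ^ 2 * sin θ ^ 2)
  have hs : |ν * cos θ| ≤ s := abs_mul_cos_le_sqrt_one_sub_sq_mul_sin_sq hν.le θ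
  obtain ⟨hs_lower, hs_upper⟩ := abs_le.mp hs
  have hνr : 0 < ν * r := by
    by_contra! h
    nlinarith [mul_nonpos_of_nonpos_of_nonneg h (by linarith : 0 ≤ ν * cos θ + s)]
  have hupper : (1 - ν ^ 2) * ρ - ν * r * (ν * cos θ + s) ≤ 0 := by linarith
  have hlower : 0 ≤ (1 - ν ^ 2) * ρ - ν * r * (ν * cos θ - s) := by
    nlinarith [mul_nonpos_of_nonneg_of_nonpos hνr.le (by linarith : ν * cos θ - s ≤ 0)]
  have hfactor := one_sub_sq_mul_sq_sub_sq_mul_dist_sq_eq (ν := ν) (r := r) (ρ := ρ)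
    (sin_sq_add_cos_sq θ) (sq_sqrt (one_sub_sq_mul_sin_sq_nonneg hν.le θ))
  nlinarith [mul_nonpos_of_nonpos_of_nonneg hupper hlower]

lemma le_mul_sqrt_of_sq_le_sq_mul {ν ρ X : ℝ} (hν : 0 ≤ ν) (h : ρ ^ 2 ≤ ν ^ 2 * X) :
    ρ ≤ ν * √X := by
  rw [← sqrt_sq hν, ← sqrt_mul (sq_nonneg ν)]
  exact le_sqrt_of_sq_le h

theorem angular_advantage_below_critical_general (ν r θ ρD : ℝ) (hν0 : 0 < ν) (hν1 : ν < 1)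
    (hle : ρD ≤ ν * r * (ν * Real.cos θ + Real.sqrt (1 - ν^2 * (Real.sin θ)^2)) / (1 - ν^2)) :
    ν * Real.sqrt ((ρD + r * Real.cos θ)^2 + r^2 * (Real.sin θ)^2) ≥ ρD := by
  have hν : ν ^ 2 < 1 := by nlinarith
  rcases le_or_gt ρD 0 with hρD | hρD
  · exact hρD.trans (by positivity)
  · rw [le_div_iff₀ (by linarith), mul_comm] at hle
    exact le_mul_sqrt_of_sq_le_sq_mul hν0.le (sq_le_sq_mul_dist_sq_of_le_upper_root hν hρD hle)

theorem angular_advantage_below_critical (ν r θ ρD : ℝ) (hν0 : 0 < ν) (hν1 : ν < 1)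
    (hr : 0 < r) (hρD : r ≤ ρD)
    (hle : ρD ≤ ν * r * (ν * Real.cos θ + Real.sqrt (1 - ν^2 * (Real.sin θ)^2)) / (1 - ν^2)) :
    ν * Real.sqrt ((ρD + r * Real.cos θ)^2 + r^2 * (Real.sin θ)^2) ≥ ρD :=
  angular_advantage_below_critical_general ν r θ ρD hν0 hν1 hle
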